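/- arXiv:2503.21563 — 2 statements merged into one kernel-verified Lean document; each statement's English description precedes it below -/
import Mathlib

section
/- Let k = 2 with group matrices A ∈ ℝ^{a×n} and B ∈ ℝ^{b×n}. If a unit vector v* minimizes v ↦ max(h_A(v), h_B(v)) over the unit sphere, then h_A(v*) = h_B(v*). -/
open Matrix

/-- The largest eigenvalue of a real symmetric matrix, via its Rayleigh-quotient
characterization: `λmax(M) = sup { vᵀ M v : ‖v‖ = 1 }`. -/
noncomputable def lamMax {n : ℕ} (M : Matrix (Fin n) (Fin n) ℝ) : ℝ :=
  sSup {r : ℝ | ∃ v : Fin n → ℝ, v ⬝ᵥ v = 1 ∧ r = v ⬝ᵥ (M *ᵥ v)}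

/-- The rank-1 fair loss `h_M(v) = λmax(MᵀM) − vᵀ(MᵀM)v`. -/
noncomputable def fairLoss {m n : ℕ} (M : Matrix (Fin m) (Fin n) ℝ) (v : Fin n → ℝ) : ℝ :=
  lamMax (Mᵀ * M) - v ⬝ᵥ ((Mᵀ * M) *ᵥ v)

/-!
If `h_B(v*) < h_A(v*)`, then near `v*` on the sphere the maximum is `h_A`, so `v*` would be a
local minimum of `h_A` on the sphere. But `h_A` has no local minimum on the sphere where it is
positive, as it is here: `h_A(v*) > h_B(v*) ≥ 0`. A maximiser `w` of `vᵀ(AᵀA)v` on the sphere is an eigenvector for `λmax`, and the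
deficit `λmax ‖y‖² − yᵀ(AᵀA)y` does not change when a multiple of `w` is added to `y`. Hence,
with the sign of `w` chosen so that `v*·w ≥ 0`, normalising `v* + εw` (`ε > 0`) divides `h_A`
by `‖v* + εw‖² > 1`.
-/

open Filter Topology

theorem isLocalMinOn_of_isMinOn_max {X β : Type*} [TopologicalSpace X] [LinearOrder β]
    [TopologicalSpace β] [OrderClosedTopology β] {f g : X → β} {s : Set X} {x : X}
    (hf : ContinuousAt f x) (hg : ContinuousAt g x)
    (hmin : IsMinOn (fun y => max (f y) (g y)) s x) (hlt : g x < f x) :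
    IsLocalMinOn f s x := by
  filter_upwards [nhdsWithin_le_nhds (hg.eventually_lt hf hlt), self_mem_nhdsWithin]
    with y hy hys
  calc f x = max (f x) (g x) := (max_eq_left hlt.le).symm
    _ ≤ max (f y) (g y) := isMinOn_iff.mp hmin y hys
    _ = f y := max_eq_left hy.le

theorem eq_zero_of_forall_mul_le_sq_mul {β K : ℝ} (h : ∀ ε : ℝ, ε * β ≤ ε ^ 2 * K) : β = 0 := by
  by_contra hβ
  have hK : 0 < |K| + 1 := by positivity
  have := h (β / (|K| + 1))
  rw [div_pow, div_mul_eq_mul_div, div_mul_eq_mul_div, div_le_div_iff₀ hK (by positivity)] at this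
  nlinarith [le_abs_self K, sq_pos_of_ne_zero hβ, mul_pos (sq_pos_of_ne_zero hβ) hK]

/-- The Euclidean unit sphere (in `ι → ℝ`, `Metric.sphere 0 1` is the sup-norm sphere). -/
def unitSphere (ι : Type*) [Fintype ι] : Set (ι → ℝ) := {v | v ⬝ᵥ v = 1}

section Sphere

variable {ι : Type*} [Fintype ι]

theorem mem_unitSphere {v : ι → ℝ} : v ∈ unitSphere ι ↔ v ⬝ᵥ v = 1 := Iff.rfl

theorem isCompact_unitSphere : IsCompact (unitSphere ι) := by
  refine Metric.isCompact_of_isClosed_isBounded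
    (isClosed_singleton.preimage (continuous_id.dotProduct continuous_id)) ?_
  refine isBounded_iff_forall_norm_le.mpr
    ⟨1, fun v hv => (pi_norm_le_iff_of_nonneg zero_le_one).mpr fun i => ?_⟩
  have : v i * v i ≤ v ⬝ᵥ v :=
    Finset.single_le_sum (f := fun j => v j * v j) (fun j _ => mul_self_nonneg (v j))
      (Finset.mem_univ i)
  rw [Real.norm_eq_abs, abs_le]
  constructor <;> nlinarith [mem_unitSphere.mp hv]

theorem dotProduct_self_nonneg (y : ι → ℝ) : 0 ≤ y ⬝ᵥ y :=
  Finset.sum_nonneg fun i _ => mul_self_nonneg (y i)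

theorem dotProduct_self_pos {y : ι → ℝ} (hy : y ≠ 0) : 0 < y ⬝ᵥ y :=
  (dotProduct_self_nonneg y).lt_of_ne' (dotProduct_self_eq_zero.not.mpr hy)

noncomputable def normalizeVec (y : ι → ℝ) : ι → ℝ := (√(y ⬝ᵥ y))⁻¹ • y

theorem normalizeVec_quadForm (M : Matrix ι ι ℝ) (y : ι → ℝ) :
    normalizeVec y ⬝ᵥ (M *ᵥ normalizeVec y) = y ⬝ᵥ (M *ᵥ y) / (y ⬝ᵥ y) := by
  rw [normalizeVec, mulVec_smul, smul_dotProduct, dotProduct_smul, smul_eq_mul, smul_eq_mul,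
    ← mul_assoc, ← mul_inv, Real.mul_self_sqrt (dotProduct_self_nonneg y), inv_mul_eq_div]

theorem normalizeVec_mem_unitSphere {y : ι → ℝ} (hy : y ≠ 0) : normalizeVec y ∈ unitSphere ι := by
  classical
  have := normalizeVec_quadForm 1 y
  rwa [one_mulVec, one_mulVec, div_self (dotProduct_self_pos hy).ne'] at this

theorem normalizeVec_of_mem_unitSphere {v : ι → ℝ} (hv : v ∈ unitSphere ι) :
    normalizeVec v = v := by
  rw [normalizeVec, mem_unitSphere.mp hv, Real.sqrt_one, inv_one, one_smul]

theorem continuousAt_normalizeVec {y : ι → ℝ} (hy : y ≠ 0) : ContinuousAt normalizeVec y := by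
  have : √(y ⬝ᵥ y) ≠ 0 := (Real.sqrt_pos.mpr (dotProduct_self_pos hy)).ne'
  unfold normalizeVec
  fun_prop (disch := exact this)

end Sphere

section QuadraticForm

variable {ι : Type*} [Fintype ι]

theorem continuous_quadForm (M : Matrix ι ι ℝ) : Continuous fun v : ι → ℝ => v ⬝ᵥ (M *ᵥ v) :=
  continuous_id.dotProduct (continuous_const.matrix_mulVec continuous_id)

theorem Matrix.IsSymm.dotProduct_mulVec_comm {M : Matrix ι ι ℝ} (hM : M.IsSymm) (x y : ι → ℝ) :
    x ⬝ᵥ (M *ᵥ y) = y ⬝ᵥ (M *ᵥ x) := by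
  rw [dotProduct_mulVec, dotProduct_comm, ← vecMul_transpose, hM.eq]

theorem Matrix.IsSymm.quadForm_add_smul {M : Matrix ι ι ℝ} (hM : M.IsSymm) (x y : ι → ℝ) (ε : ℝ) :
    (x + ε • y) ⬝ᵥ (M *ᵥ (x + ε • y)) =
      x ⬝ᵥ (M *ᵥ x) + 2 * ε * (x ⬝ᵥ (M *ᵥ y)) + ε ^ 2 * (y ⬝ᵥ (M *ᵥ y)) := by
  simp only [mulVec_add, mulVec_smul, add_dotProduct, dotProduct_add, smul_dotProduct,
    dotProduct_smul, smul_eq_mul, hM.dotProduct_mulVec_comm y x]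
  ring

theorem dotProduct_self_add_smul (x y : ι → ℝ) (ε : ℝ) :
    (x + ε • y) ⬝ᵥ (x + ε • y) = x ⬝ᵥ x + 2 * ε * (x ⬝ᵥ y) + ε ^ 2 * (y ⬝ᵥ y) := by
  classical
  simpa only [one_mulVec] using (isSymm_one (α := ℝ) (n := ι)).quadForm_add_smul x y ε

theorem Matrix.IsSymm.quadForm_add_smul_eigenvector {M : Matrix ι ι ℝ} (hM : M.IsSymm) {μ : ℝ}
    {w : ι → ℝ} (hw : M *ᵥ w = μ • w) (v : ι → ℝ) (ε : ℝ) :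
    (v + ε • w) ⬝ᵥ (M *ᵥ (v + ε • w)) - μ * ((v + ε • w) ⬝ᵥ (v + ε • w)) =
      v ⬝ᵥ (M *ᵥ v) - μ * (v ⬝ᵥ v) := by
  rw [hM.quadForm_add_smul, dotProduct_self_add_smul, hw]
  simp only [dotProduct_smul, smul_eq_mul]
  ring

end QuadraticForm

section LamMax

variable {n : ℕ}

theorem lamMax_eq_sSup_image (M : Matrix (Fin n) (Fin n) ℝ) :
    lamMax M = sSup ((fun v => v ⬝ᵥ (M *ᵥ v)) '' unitSphere (Fin n)) := by
  simp only [lamMax, Set.image, mem_unitSphere, eq_comm]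

theorem le_lamMax (M : Matrix (Fin n) (Fin n) ℝ) {u : Fin n → ℝ} (hu : u ∈ unitSphere (Fin n)) :
    u ⬝ᵥ (M *ᵥ u) ≤ lamMax M := by
  rw [lamMax_eq_sSup_image]
  exact le_csSup (isCompact_unitSphere.bddAbove_image (continuous_quadForm M).continuousOn)
    (Set.mem_image_of_mem _ hu)

theorem exists_eq_lamMax (M : Matrix (Fin n) (Fin n) ℝ) (hne : (unitSphere (Fin n)).Nonempty) :
    ∃ w ∈ unitSphere (Fin n), w ⬝ᵥ (M *ᵥ w) = lamMax M := by
  obtain ⟨w, hw, hmax⟩ :=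
    isCompact_unitSphere.exists_isMaxOn hne (continuous_quadForm M).continuousOn
  refine ⟨w, hw, ?_⟩
  rw [lamMax_eq_sSup_image]
  exact (IsGreatest.csSup_eq ⟨Set.mem_image_of_mem _ hw,
    Set.forall_mem_image.mpr fun u hu => isMaxOn_iff.mp hmax u hu⟩).symm

theorem quadForm_le_lamMax_mul (M : Matrix (Fin n) (Fin n) ℝ) (p : Fin n → ℝ) :
    p ⬝ᵥ (M *ᵥ p) ≤ lamMax M * (p ⬝ᵥ p) := by
  rcases eq_or_ne p 0 with rfl | hp
  · simp
  have := le_lamMax M (normalizeVec_mem_unitSphere hp)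
  rwa [normalizeVec_quadForm, div_le_iff₀ (dotProduct_self_pos hp)] at this

theorem Matrix.IsSymm.mulVec_eq_lamMax_smul {M : Matrix (Fin n) (Fin n) ℝ} (hM : M.IsSymm)
    {w : Fin n → ℝ} (hw : w ∈ unitSphere (Fin n)) (hmax : w ⬝ᵥ (M *ᵥ w) = lamMax M) :
    M *ᵥ w = lamMax M • w := by
  have key : ∀ p, (M *ᵥ w) ⬝ᵥ p = (lamMax M • w) ⬝ᵥ p := by
    intro p
    rw [dotProduct_comm, ← hM.dotProduct_mulVec_comm, smul_dotProduct, smul_eq_mul]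
    -- expanding the bound at `w + ε • p`, a term linear in `ε` is dominated by a quadratic one
    have h := eq_zero_of_forall_mul_le_sq_mul (β := 2 * (w ⬝ᵥ (M *ᵥ p) - lamMax M * (w ⬝ᵥ p)))
      (K := lamMax M * (p ⬝ᵥ p) - p ⬝ᵥ (M *ᵥ p)) fun ε => by
        have := quadForm_le_lamMax_mul M (w + ε • p)
        rw [hM.quadForm_add_smul, dotProduct_self_add_smul, hmax, mem_unitSphere.mp hw] at this
        linear_combination this
    linarith
  ext i
  simpa [dotProduct_single] using key (Pi.single i 1)

theorem Matrix.IsSymm.exists_mulVec_eq_lamMax_smul_of_dotProduct_nonneg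
    {M : Matrix (Fin n) (Fin n) ℝ} (hM : M.IsSymm) {v : Fin n → ℝ} (hv : v ∈ unitSphere (Fin n)) :
    ∃ w ∈ unitSphere (Fin n), M *ᵥ w = lamMax M • w ∧ 0 ≤ v ⬝ᵥ w := by
  obtain ⟨w, hw, hwmax⟩ := exists_eq_lamMax M ⟨v, hv⟩
  have hMw := hM.mulVec_eq_lamMax_smul hw hwmax
  rcases le_total 0 (v ⬝ᵥ w) with h | h
  · exact ⟨w, hw, hMw, h⟩
  · refine ⟨-w, by simpa [mem_unitSphere] using hw, ?_, by simpa using h⟩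
    rw [mulVec_neg, hMw, smul_neg]

end LamMax

section FairLoss

variable {m n : ℕ}

theorem isSymm_transpose_mul_self_rect (A : Matrix (Fin m) (Fin n) ℝ) : (Aᵀ * A).IsSymm := by
  rw [IsSymm, transpose_mul, transpose_transpose]

theorem continuous_fairLoss (A : Matrix (Fin m) (Fin n) ℝ) : Continuous (fairLoss A) :=
  continuous_const.sub (continuous_quadForm _)

theorem fairLoss_nonneg (A : Matrix (Fin m) (Fin n) ℝ) {v : Fin n → ℝ}
    (hv : v ∈ unitSphere (Fin n)) : 0 ≤ fairLoss A v :=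
  sub_nonneg.mpr (le_lamMax _ hv)

theorem fairLoss_normalizeVec_add_smul (A : Matrix (Fin m) (Fin n) ℝ) {v w : Fin n → ℝ}
    (hv : v ∈ unitSphere (Fin n)) (hw : (Aᵀ * A) *ᵥ w = lamMax (Aᵀ * A) • w) {ε : ℝ}
    (hne : v + ε • w ≠ 0) :
    fairLoss A (normalizeVec (v + ε • w)) = fairLoss A v / ((v + ε • w) ⬝ᵥ (v + ε • w)) := by
  have h := (isSymm_transpose_mul_self_rect A).quadForm_add_smul_eigenvector hw v ε
  rw [mem_unitSphere.mp hv, mul_one] at h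
  rw [fairLoss, fairLoss, normalizeVec_quadForm, eq_div_iff (dotProduct_self_pos hne).ne',
    sub_mul, div_mul_cancel₀ _ (dotProduct_self_pos hne).ne']
  linarith

theorem not_isLocalMinOn_fairLoss (A : Matrix (Fin m) (Fin n) ℝ) {v : Fin n → ℝ}
    (hv : v ∈ unitSphere (Fin n)) (hpos : 0 < fairLoss A v) :
    ¬ IsLocalMinOn (fairLoss A) (unitSphere (Fin n)) v := by
  obtain ⟨w, hw, hAw, hvw⟩ :=
    (isSymm_transpose_mul_self_rect A).exists_mulVec_eq_lamMax_smul_of_dotProduct_nonneg hv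
  have hnorm : ∀ ε : ℝ, 0 < ε → 1 < (v + ε • w) ⬝ᵥ (v + ε • w) := fun ε hε => by
    rw [dotProduct_self_add_smul, mem_unitSphere.mp hv, mem_unitSphere.mp hw]
    nlinarith
  have hne : ∀ ε : ℝ, 0 < ε → v + ε • w ≠ 0 := fun ε hε h =>
    (hnorm ε hε).not_ge (by simp [h])
  have hv0 : v ≠ 0 := fun h => by simp [h, mem_unitSphere] at hv
  have hpath : Tendsto (fun ε : ℝ => normalizeVec (v + ε • w)) (𝓝[>] 0)
      (𝓝[unitSphere (Fin n)] v) := by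
    refine tendsto_nhdsWithin_iff.mpr ⟨?_, eventually_nhdsWithin_of_forall
      fun ε hε => normalizeVec_mem_unitSphere (hne ε hε)⟩
    have hcont : ContinuousAt (fun ε : ℝ => normalizeVec (v + ε • w)) 0 :=
      ContinuousAt.comp_of_eq (continuousAt_normalizeVec hv0) (by fun_prop) (by simp)
    simpa [normalizeVec_of_mem_unitSphere hv] using hcont.tendsto.mono_left nhdsWithin_le_nhds
  intro hmin
  obtain ⟨ε, hle, hε⟩ := ((hpath.eventually hmin).and self_mem_nhdsWithin).exists
  rw [fairLoss_normalizeVec_add_smul A hv hAw (hne ε hε)] at hle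
  exact hle.not_gt (div_lt_self hpos (hnorm ε hε))

end FairLoss

/-- for two groups `A, B`, any unit vector `v*` minimizing
`v ↦ max(h_A(v), h_B(v))` over the unit sphere satisfies `h_A(v*) = h_B(v*)`. -/
theorem stmt5 {a b n : ℕ} (A : Matrix (Fin a) (Fin n) ℝ) (B : Matrix (Fin b) (Fin n) ℝ)
    (vstar : Fin n → ℝ) (hv : vstar ⬝ᵥ vstar = 1)
    (hmin : ∀ u : Fin n → ℝ, u ⬝ᵥ u = 1 →
      max (fairLoss A vstar) (fairLoss B vstar) ≤ max (fairLoss A u) (fairLoss B u)) :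
    fairLoss A vstar = fairLoss B vstar := by
  have hminOn : IsMinOn (fun u => max (fairLoss A u) (fairLoss B u)) (unitSphere (Fin n)) vstar :=
    isMinOn_iff.mpr hmin
  have hA := (continuous_fairLoss A).continuousAt (x := vstar)
  have hB := (continuous_fairLoss B).continuousAt (x := vstar)
  by_contra hne
  rcases lt_or_gt_of_ne hne with h | h
  · refine not_isLocalMinOn_fairLoss B hv ((fairLoss_nonneg A hv).trans_lt h) ?_
    exact isLocalMinOn_of_isMinOn_max hB hA (by simpa only [max_comm] using hminOn) h
  · refine not_isLocalMinOn_fairLoss A hv ((fairLoss_nonneg B hv).trans_lt h) ?_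
    exact isLocalMinOn_of_isMinOn_max hA hB hminOn h
end

section
/- Let k = 2 with group matrices A ∈ ℝ^{a×n} and B ∈ ℝ^{b×n}, and let μ ∈ [0,1]. Suppose v ∈ ℝ^n is a unit eigenvector of C(μ) = μ AᵀA + (1−μ) BᵀB corresponding to its largest eigenvalue λmax(C(μ)), and suppose h_A(v) = h_B(v). Then v is a global minimizer of u ↦ max(h_A(u), h_B(u)) over the unit sphere, μ is a global maximizer of g(t) = t s_1 + (1−t) s_2 − λmax(C(t)) over [0,1], and the common optimal value equals h_A(v), where s_1 = λmax(AᵀA) and s_2 = λmax(BᵀB). -/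
open Matrix

/-- `C(μ) = μ AᵀA + (1−μ) BᵀB`. -/
noncomputable def Cmat {a b n : ℕ} (A : Matrix (Fin a) (Fin n) ℝ)
    (B : Matrix (Fin b) (Fin n) ℝ) (t : ℝ) : Matrix (Fin n) (Fin n) ℝ :=
  t • (Aᵀ * A) + (1 - t) • (Bᵀ * B)

/-- The two-group dual objective `g(t) = t s₁ + (1−t) s₂ − λmax(C(t))`. -/
noncomputable def gdual {a b n : ℕ} (A : Matrix (Fin a) (Fin n) ℝ)
    (B : Matrix (Fin b) (Fin n) ℝ) (t : ℝ) : ℝ :=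
  t * lamMax (Aᵀ * A) + (1 - t) * lamMax (Bᵀ * B) - lamMax (Cmat A B t)

lemma rayleigh_bddAbove {n : ℕ} (M : Matrix (Fin n) (Fin n) ℝ) :
    BddAbove {r : ℝ | ∃ v : Fin n → ℝ, v ⬝ᵥ v = 1 ∧ r = v ⬝ᵥ (M *ᵥ v)} := by
  refine ⟨∑ i, ∑ j, |M i j|, ?_⟩
  rintro r ⟨v, hv, rfl⟩
  have habs : ∀ i, |v i| ≤ 1 := by
    intro i
    rw [abs_le_one_iff_mul_self_le_one]
    calc v i * v i ≤ ∑ j, v j * v j := by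
          exact Finset.single_le_sum (fun j _ => mul_self_nonneg (v j)) (Finset.mem_univ i)
      _ = 1 := hv
  have : v ⬝ᵥ (M *ᵥ v) = ∑ i, ∑ j, v i * (M i j * v j) := by
    simp [dotProduct, mulVec, Finset.mul_sum]
  rw [this]
  refine Finset.sum_le_sum fun i _ => Finset.sum_le_sum fun j _ => ?_
  calc v i * (M i j * v j) ≤ |v i * (M i j * v j)| := le_abs_self _
    _ = |v i| * (|M i j| * |v j|) := by rw [abs_mul, abs_mul]
    _ ≤ 1 * (|M i j| * 1) := by
        have h1 := habs i; have h2 := habs j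
        gcongr
    _ = |M i j| := by ring

lemma rayleigh_le_lamMax {n : ℕ} (M : Matrix (Fin n) (Fin n) ℝ) {u : Fin n → ℝ}
    (hu : u ⬝ᵥ u = 1) : u ⬝ᵥ (M *ᵥ u) ≤ lamMax M :=
  le_csSup (rayleigh_bddAbove M) ⟨u, hu, rfl⟩

lemma quad_Cmat {a b n : ℕ} (A : Matrix (Fin a) (Fin n) ℝ)
    (B : Matrix (Fin b) (Fin n) ℝ) (t : ℝ) (u : Fin n → ℝ) :
    u ⬝ᵥ (Cmat A B t *ᵥ u)
      = t * (u ⬝ᵥ ((Aᵀ * A) *ᵥ u)) + (1 - t) * (u ⬝ᵥ ((Bᵀ * B) *ᵥ u)) := by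
  simp [Cmat, add_mulVec, smul_mulVec, dotProduct_add, dotProduct_smul, smul_eq_mul]

/-- if `μ ∈ [0,1]` and `v` is a unit top eigenvector of `C(μ)` with
`h_A(v) = h_B(v)`, then `v` globally minimizes `u ↦ max(h_A(u), h_B(u))` over the
unit sphere, `μ` globally maximizes `g` over `[0,1]`, and the common optimal
value equals `h_A(v)`. -/
theorem stmt7 {a b n : ℕ} (A : Matrix (Fin a) (Fin n) ℝ) (B : Matrix (Fin b) (Fin n) ℝ)
    (μ : ℝ) (hμ : μ ∈ Set.Icc (0 : ℝ) 1)
    (v : Fin n → ℝ) (hv : v ⬝ᵥ v = 1)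
    (heig : Cmat A B μ *ᵥ v = lamMax (Cmat A B μ) • v)
    (heq : fairLoss A v = fairLoss B v) :
    (∀ u : Fin n → ℝ, u ⬝ᵥ u = 1 →
      max (fairLoss A v) (fairLoss B v) ≤ max (fairLoss A u) (fairLoss B u)) ∧
    (∀ t ∈ Set.Icc (0 : ℝ) 1, gdual A B t ≤ gdual A B μ) ∧
    gdual A B μ = fairLoss A v := by
  obtain ⟨hμ0, hμ1⟩ := hμ
  -- λmax(C(μ)) equals the Rayleigh quotient at v
  have hlam : lamMax (Cmat A B μ) = v ⬝ᵥ (Cmat A B μ *ᵥ v) := by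
    rw [heig, dotProduct_smul, hv, smul_eq_mul, mul_one]
  have hquad := quad_Cmat A B μ v
  -- common optimal value
  have hval : gdual A B μ = fairLoss A v := by
    have h2 : fairLoss A v = fairLoss B v := heq
    simp only [gdual, hlam, hquad, fairLoss] at *
    linear_combination (μ - 1) * h2
  -- weak duality
  have key : ∀ t ∈ Set.Icc (0 : ℝ) 1, ∀ u : Fin n → ℝ, u ⬝ᵥ u = 1 →
      gdual A B t ≤ max (fairLoss A u) (fairLoss B u) := by
    rintro t ⟨ht0, ht1⟩ u hu
    have hCle : t * (u ⬝ᵥ ((Aᵀ * A) *ᵥ u)) + (1 - t) * (u ⬝ᵥ ((Bᵀ * B) *ᵥ u))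
        ≤ lamMax (Cmat A B t) := by
      rw [← quad_Cmat A B t u]
      exact rayleigh_le_lamMax _ hu
    have h1 : gdual A B t ≤ t * fairLoss A u + (1 - t) * fairLoss B u := by
      simp only [gdual, fairLoss]
      nlinarith [hCle]
    have h2 : t * fairLoss A u + (1 - t) * fairLoss B u
        ≤ max (fairLoss A u) (fairLoss B u) := by
      have ha := le_max_left (fairLoss A u) (fairLoss B u)
      have hb := le_max_right (fairLoss A u) (fairLoss B u)
      nlinarith [mul_le_mul_of_nonneg_left ha ht0,
        mul_le_mul_of_nonneg_left hb (by linarith : (0:ℝ) ≤ 1 - t)]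
    linarith
  refine ⟨?_, ?_, hval⟩
  · intro u hu
    have := key μ ⟨hμ0, hμ1⟩ u hu
    calc max (fairLoss A v) (fairLoss B v) = fairLoss A v := by rw [← heq, max_self]
      _ = gdual A B μ := hval.symm
      _ ≤ max (fairLoss A u) (fairLoss B u) := this
  · intro t ht
    calc gdual A B t ≤ max (fairLoss A v) (fairLoss B v) := key t ht v hv
      _ = fairLoss A v := by rw [← heq, max_self]
      _ = gdual A B μ := hval.symm
end
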